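/- With the notation of the paper, for every $t \in \{0, \ldots, T-1\}$, state $y$, action $a \in A$, and parameter $\theta \in \tau(t, y)$: $J_t(y, (a; \varphi^{t+1}), (\theta; \psi^{t+1})) = Q^{a,\theta}_{y,t} J_{t+1}(\cdot, \varphi^{t+1}, \psi^{t+1}) - \big[ Q^{a,\theta}_{y,t}(G \circ g^{\varphi,\psi}_{t+1}) - G(Q^{a,\theta}_{y,t} g^{\varphi,\psi}_{t+1}) \big]$. -/
import Mathlib

/-- Lemma 3.2 of the paper.  `Qop t y a θ` is the integration operator
`f ↦ ∫ f(y') Q(dy' | t, y, a, θ)` (assumed additive, as integration is);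
`f t`, `g t` are `f_t^{φ,ψ}`, `g_t^{φ,ψ}` satisfying the tower recursions,
`J t y = f_t(y) + G(g_t(y))` is the criterion along `(φ^t, ψ^t)`, and
`Jcat t y a θ = Q^{a,θ}_{y,t} f_{t+1} + G(Q^{a,θ}_{y,t} g_{t+1})` is the
criterion for the concatenated strategies `((a; φ^{t+1}), (θ; ψ^{t+1}))`.
Then for every `t ∈ {0,…,T-1}`, state `y`, action `a` and parameter
`θ ∈ τ(t,y)`:
`J_t(y,(a;φ^{t+1}),(θ;ψ^{t+1})) = Q^{a,θ}_{y,t} J_{t+1}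
  - [Q^{a,θ}_{y,t}(G ∘ g_{t+1}) - G(Q^{a,θ}_{y,t} g_{t+1})]`. -/
theorem stmt_9 {E A Θ : Type*} (T : ℕ) (τ : ℕ → E → Set Θ)
    (G : ℝ → ℝ)
    (Qop : ℕ → E → A → Θ → (E → ℝ) → ℝ)
    (hQadd : ∀ t y a θ (u v : E → ℝ),
      Qop t y a θ (fun x => u x + v x) = Qop t y a θ u + Qop t y a θ v)
    (f g : ℕ → E → ℝ) (J : ℕ → E → ℝ) (Jcat : ℕ → E → A → Θ → ℝ)
    (hJ : ∀ t y, J t y = f t y + G (g t y))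
    (hJcat : ∀ t y a θ,
      Jcat t y a θ = Qop t y a θ (f (t + 1)) + G (Qop t y a θ (g (t + 1)))) :
    ∀ t < T, ∀ (y : E) (a : A), ∀ θ ∈ τ t y,
      Jcat t y a θ
        = Qop t y a θ (fun x => J (t + 1) x)
          - (Qop t y a θ (fun x => G (g (t + 1) x))
              - G (Qop t y a θ (g (t + 1)))) := by
  intro t _ y a θ _
  have h1 : Qop t y a θ (fun x => J (t + 1) x)
      = Qop t y a θ (f (t + 1)) + Qop t y a θ (fun x => G (g (t + 1) x)) := by
    rw [← hQadd]
    congr 1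
    ext x
    exact hJ (t + 1) x
  rw [hJcat, h1]
  ring
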